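/- For any freshness environment ∇, nominal substitution σ, and nominal term t with Vars(t) ⊆ Dom(σ), applying the translated substitution to the translation of t (with empty environment) equals the translation of σ(t): ⟦σ⟧_∇(⟦t⟧_∅) = ⟦σ(t)⟧_∇, up to βη-equivalence. -/

import Mathlib

set_option linter.unreachableTactic false
set_option linter.unusedTactic false

/-! Nominal terms -/

abbrev Atom := ℕ
abbrev Var := ℕ

/-- The swapping `(a b)` acting on atoms. -/
def swapAtom (a b c : Atom) : Atom := if c = a then b else if c = b then a else c

/-- A permutation presented as a finite list of swappings. -/
abbrev Perm0 := List (Atom × Atom)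

/-- Action of a list of swappings: `(a₁ b₁)…(aₙ bₙ)·c = (a₁ b₁)·(…·((aₙ bₙ)·c))`. -/
def permAtom (π : Perm0) (c : Atom) : Atom := π.foldr (fun p d => swapAtom p.1 p.2 d) c

/-- Nominal terms. -/
inductive NTerm where
  | atom : Atom → NTerm
  | app  : ℕ → List NTerm → NTerm
  | abs  : Atom → NTerm → NTerm
  | susp : Perm0 → Var → NTerm

/-- Action of a permutation (list of swappings) on a nominal term. -/
def permTerm (π : Perm0) : NTerm → NTerm
  | .atom a => .atom (permAtom π a)
  | .app f ts => .app f (ts.attach.map (fun t => permTerm π t.1))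
  | .abs a t => .abs (permAtom π a) (permTerm π t)
  | .susp π' X => .susp (π ++ π') X
decreasing_by
  all_goals simp_wf
  all_goals first
    | (have := List.sizeOf_lt_of_mem t.2; omega)
    | omega

/-- Action of a single swapping on a nominal term. -/
def swapTerm (a b : Atom) (t : NTerm) : NTerm := permTerm [(a, b)] t

/-- Variables of a nominal term. -/
def nvars : NTerm → Finset Var
  | .atom _ => ∅
  | .app _ ts => ts.attach.foldr (fun t s => nvars t.1 ∪ s) ∅
  | .abs _ t => nvars t
  | .susp _ X => {X}
decreasing_by
  all_goals simp_wf
  all_goals first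
    | (have := List.sizeOf_lt_of_mem t.2; omega)
    | omega

/-- Atoms of a nominal term (including those in suspended permutations). -/
def natoms : NTerm → Finset Atom
  | .atom a => {a}
  | .app _ ts => ts.attach.foldr (fun t s => natoms t.1 ∪ s) ∅
  | .abs a t => insert a (natoms t)
  | .susp π _ => π.foldr (fun p s => insert p.1 (insert p.2 s)) ∅
decreasing_by
  all_goals simp_wf
  all_goals first
    | (have := List.sizeOf_lt_of_mem t.2; omega)
    | omega

/-- Size of a nominal term. -/
def sizeN : NTerm → ℕ
  | .atom _ => 1
  | .app _ ts => 1 + (ts.attach.map (fun t => sizeN t.1)).sum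
  | .abs _ t => 1 + sizeN t
  | .susp π _ => 1 + π.length
decreasing_by
  all_goals simp_wf
  all_goals first
    | (have := List.sizeOf_lt_of_mem t.2; omega)
    | omega

/-! Freshness and α-equivalence for nominal terms -/

/-- The freshness judgement `Δ ⊢ a # t`. -/
inductive Fresh (Δ : Finset (Atom × Var)) : Atom → NTerm → Prop
  | atom {a a'} : a ≠ a' → Fresh Δ a (.atom a')
  | susp {a π X} : (permAtom π.reverse a, X) ∈ Δ → Fresh Δ a (.susp π X)
  | app {a f ts} : (∀ t ∈ ts, Fresh Δ a t) → Fresh Δ a (.app f ts)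
  | abs1 {a t} : Fresh Δ a (.abs a t)
  | abs2 {a a' t} : a ≠ a' → Fresh Δ a t → Fresh Δ a (.abs a' t)

/-- The α-equivalence judgement `Δ ⊢ t ≈ u`. -/
inductive Alpha (Δ : Finset (Atom × Var)) : NTerm → NTerm → Prop
  | atom (a) : Alpha Δ (.atom a) (.atom a)
  | susp {π π' X} : (∀ a, permAtom π a ≠ permAtom π' a → (a, X) ∈ Δ) →
      Alpha Δ (.susp π X) (.susp π' X)
  | app {f ts us} : ts.length = us.length →
      (∀ p ∈ ts.zip us, Alpha Δ p.1 p.2) → Alpha Δ (.app f ts) (.app f us)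
  | abs1 {a t u} : Alpha Δ t u → Alpha Δ (.abs a t) (.abs a u)
  | abs2 {a b t u} : a ≠ b → Alpha Δ t (swapTerm a b u) → Fresh Δ a u →
      Alpha Δ (.abs a t) (.abs b u)

/-- Nominal substitutions (partial, with explicit domain). -/
abbrev NSub := Var → Option NTerm

/-- Domain of a nominal substitution. -/
def domN (σ : NSub) : Set Var := {X | (σ X).isSome}

/-- Application of a nominal substitution (capturing; suspended permutations are applied). -/
def applyN (σ : NSub) : NTerm → NTerm
  | .atom a => .atom a
  | .app f ts => .app f (ts.attach.map (fun t => applyN σ t.1))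
  | .abs a t => .abs a (applyN σ t)
  | .susp π X =>
      match σ X with
      | some u => permTerm π u
      | none => .susp π X
decreasing_by
  all_goals simp_wf
  all_goals first
    | (have := List.sizeOf_lt_of_mem t.2; omega)
    | omega

/-- The trivial suspension of a variable. -/
def nsuspV (X : Var) : NTerm := .susp [] X

/-! λ-terms -/

/-- λ-calculus variables: either (the image of) an atom or (the image of) a nominal variable. -/
abbrev LVar := Atom ⊕ Var

/-- Untyped λ-terms with constants. -/
inductive LTerm where
  | var : LVar → LTerm
  | const : ℕ → LTerm
  | lam : LVar → LTerm → LTerm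
  | app : LTerm → LTerm → LTerm
deriving DecidableEq

/-- Iterated application `h(t₁,…,tₙ)`. -/
def appList (h : LTerm) (ts : List LTerm) : LTerm := ts.foldl .app h

/-- Iterated abstraction `λx₁…λxₙ.t`. -/
def lamList (xs : List LVar) (t : LTerm) : LTerm := xs.foldr .lam t

/-- Free variables of a λ-term. -/
def FVL : LTerm → Finset LVar
  | .var v => {v}
  | .const _ => ∅
  | .lam x t => (FVL t).erase x
  | .app t u => FVL t ∪ FVL u

/-- All variables (free, bound and binding) of a λ-term. -/
def allVarsL : LTerm → Finset LVar
  | .var v => {v}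
  | .const _ => ∅
  | .lam x t => insert x (allVarsL t)
  | .app t u => allVarsL t ∪ allVarsL u

/-- Binder variables of a λ-term. -/
def bvarsL : LTerm → Finset LVar
  | .var _ => ∅
  | .const _ => ∅
  | .lam x t => insert x (bvarsL t)
  | .app t u => bvarsL t ∪ bvarsL u

/-- Size of a λ-term. -/
def sizeL : LTerm → ℕ
  | .var _ => 1
  | .const _ => 1
  | .lam _ t => 1 + sizeL t
  | .app t u => 1 + sizeL t + sizeL u

/-- The function on variable names exchanging `x` and `y`. -/
def varMap (x y : LVar) : LVar → LVar := fun z => if z = x then y else if z = y then x else z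

/-- Renaming all occurrences of variables (free, bound and binding) of a λ-term. -/
def renameAll (f : LVar → LVar) : LTerm → LTerm
  | .var v => .var (f v)
  | .const c => .const c
  | .lam x t => .lam (f x) (renameAll f t)
  | .app t u => .app (renameAll f t) (renameAll f u)

/-- The swapping `(x y)·t` on λ-terms, exchanging `x` and `y` at every occurrence. -/
def swapL (x y : LVar) (t : LTerm) : LTerm := renameAll (varMap x y) t

theorem sizeL_renameAll (f : LVar → LVar) (t : LTerm) : sizeL (renameAll f t) = sizeL t := by
  induction t <;> simp [renameAll, sizeL, *]

/-- α-equivalence of λ-terms. -/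
inductive AEq : LTerm → LTerm → Prop
  | var (v) : AEq (.var v) (.var v)
  | const (c) : AEq (.const c) (.const c)
  | app {t t' u u'} : AEq t t' → AEq u u' → AEq (.app t u) (.app t' u')
  | lam {x y t u} (z : LVar) : z ∉ allVarsL t → z ∉ allVarsL u → z ≠ x → z ≠ y →
      AEq (swapL x z t) (swapL y z u) → AEq (.lam x t) (.lam y u)

/-- Naive (possibly capturing) substitution of `u` for the free variable `x`. -/
def nsubst (x : LVar) (u : LTerm) : LTerm → LTerm
  | .var y => if y = x then u else .var y
  | .const c => .const c
  | .app t1 t2 => .app (nsubst x u t1) (nsubst x u t2)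
  | .lam y t => if y = x then .lam y t else .lam y (nsubst x u t)

/-- αβη-convertibility of λ-terms.  The β-rule carries a capture-freeness side
condition; arbitrary redexes are handled by first α-converting. -/
inductive Conv : LTerm → LTerm → Prop
  | refl (t) : Conv t t
  | symm {t u} : Conv t u → Conv u t
  | trans {t u v} : Conv t u → Conv u v → Conv t v
  | appc {t t' u u'} : Conv t t' → Conv u u' → Conv (.app t u) (.app t' u')
  | lamc {x t t'} : Conv t t' → Conv (.lam x t) (.lam x t')
  | alpha {t u} : AEq t u → Conv t u
  | beta {x t u} : (∀ v ∈ FVL u, v ∉ bvarsL t) → Conv (.app (.lam x t) u) (nsubst x u t)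
  | eta {x t} : x ∉ FVL t → Conv (.lam x (.app t (.var x))) t

/-- A fresh variable not occurring in a given finite set. -/
def freshVar (s : Finset LVar) : LVar :=
  .inl ((s.image (fun v => match v with | .inl a => a | .inr b => b)).sup id + 1)

/-- Capture-avoiding simultaneous renaming of free variables along `ρ`. -/
def casub (ρ : LVar → LVar) : LTerm → LTerm
  | .var z => .var (ρ z)
  | .const c => .const c
  | .app t u => .app (casub ρ t) (casub ρ u)
  | .lam z t =>
      if h : ∃ w ∈ FVL t, w ≠ z ∧ ρ w = z then
        let z' := freshVar (allVarsL t ∪ (FVL t).image ρ ∪ {z})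
        .lam z' (casub ρ (swapL z z' t))
      else .lam z (casub (fun w => if w = z then z else ρ w) t)
termination_by t => sizeL t
decreasing_by
  all_goals simp_wf
  all_goals simp [swapL, sizeL_renameAll, sizeL]
  all_goals omega

/-! Sorts and simple types -/

/-- Nominal sorts and arities: atom sorts `ν`, data sorts `δ`, abstraction
sorts `⟨ν⟩τ` and arities `τ₁×…×τₙ→δ`. -/
inductive NSort where
  | atom : ℕ → NSort
  | data : ℕ → NSort
  | abs : ℕ → NSort → NSort
  | arr : List NSort → ℕ → NSort

/-- Simple types with one base type per atom sort and per data sort. -/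
inductive STy where
  | atomT : ℕ → STy
  | dataT : ℕ → STy
  | arrT : STy → STy → STy
deriving DecidableEq

/-- The sort-to-type translation `⟦·⟧`. -/
def trSort : NSort → STy
  | .atom n => .atomT n
  | .data n => .dataT n
  | .abs n τ => .arrT (.atomT n) (trSort τ)
  | .arr τs d => τs.attach.foldr (fun τ T => .arrT (trSort τ.1) T) (.dataT d)
decreasing_by
  all_goals simp_wf
  all_goals first
    | (have := List.sizeOf_lt_of_mem τ.2; omega)
    | omega

/-- A sort is basic if it is an atom sort or a data sort. -/
def NSort.isBasic : NSort → Prop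
  | .atom _ => True
  | .data _ => True
  | _ => False

/-- A nominal signature: sorts of atoms, sorts of variables, arities of function symbols. -/
structure Sig where
  sortA : Atom → ℕ
  sortV : Var → NSort
  arF : ℕ → List NSort × ℕ

/-- The sorting judgement for nominal terms. -/
inductive HasSortN (S : Sig) : NTerm → NSort → Prop
  | atom (a) : HasSortN S (.atom a) (.atom (S.sortA a))
  | app {f ts} : ts.length = (S.arF f).1.length →
      (∀ p ∈ ts.zip (S.arF f).1, HasSortN S p.1 p.2) →
      HasSortN S (.app f ts) (.data (S.arF f).2)
  | abs {a t τ} : HasSortN S t τ → HasSortN S (.abs a t) (.abs (S.sortA a) τ)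
  | susp {π X} : (∀ a, S.sortA (permAtom π a) = S.sortA a) →
      HasSortN S (.susp π X) (S.sortV X)

/-! The translation from nominal terms to λ-terms -/

/-- The atoms capturable by `X` under `Δ`: the sublist of `as` of atoms `a` with `a # X ∉ Δ`. -/
def capList (as : List Atom) (Δ : Finset (Atom × Var)) (X : Var) : List Atom :=
  as.filter (fun a => (a, X) ∉ Δ)

/-- The translation `⟦t⟧_Δ` of a nominal term into a λ-term, relative to the
fixed atom list `as` and the freshness environment `Δ`. -/
def trT (as : List Atom) (Δ : Finset (Atom × Var)) : NTerm → LTerm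
  | .atom a => .var (.inl a)
  | .app f ts => appList (.const f) (ts.attach.map (fun t => trT as Δ t.1))
  | .abs a t => .lam (.inl a) (trT as Δ t)
  | .susp π X => appList (.var (.inr X))
      ((capList as Δ X).map (fun b => .var (.inl (permAtom π b))))
decreasing_by
  all_goals simp_wf
  all_goals first
    | (have := List.sizeOf_lt_of_mem t.2; omega)
    | omega

/-- Typing contexts as total functions. -/
abbrev Ctx := LVar → STy

/-- The simply-typed λ-calculus typing judgement. -/
inductive HasTy (cty : ℕ → STy) : Ctx → LTerm → STy → Prop
  | var (Γ : Ctx) (v) : HasTy cty Γ (.var v) (Γ v)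
  | const (Γ : Ctx) (c) : HasTy cty Γ (.const c) (cty c)
  | lam {Γ : Ctx} {x t T U} : HasTy cty (Function.update Γ x T) t U →
      HasTy cty Γ (.lam x t) (.arrT T U)
  | app {Γ : Ctx} {t u T U} : HasTy cty Γ t (.arrT T U) → HasTy cty Γ u T →
      HasTy cty Γ (.app t u) U

/-- Type of the constant translating a function symbol `f : τ₁×…×τₙ→δ`. -/
def ctySig (S : Sig) (f : ℕ) : STy :=
  (S.arF f).1.foldr (fun τ T => .arrT (trSort τ) T) (.dataT (S.arF f).2)

/-- Type assigned to the free variable translating a nominal variable `X`. -/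
def varTy (S : Sig) (as : List Atom) (Δ : Finset (Atom × Var)) (X : Var) : STy :=
  (capList as Δ X).foldr (fun a T => .arrT (.atomT (S.sortA a)) T) (trSort (S.sortV X))

/-- The typing context of the translation: atoms get their atom-sort base type
and nominal variables get the arrow type over their capturable atoms. -/
def trCtx (S : Sig) (as : List Atom) (Δ : Finset (Atom × Var)) : Ctx
  | .inl a => .atomT (S.sortA a)
  | .inr X => varTy S as Δ X

/-! Higher-order patterns -/

/-- `IsPattern B t` : in the scope of bound variables `B`, every free variable of `t`
is applied to a list of pairwise distinct bound variables. -/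
inductive IsPattern : List LVar → LTerm → Prop
  | bvar {B v} : v ∈ B → IsPattern B (.var v)
  | flex {B : List LVar} {X : Var} {args : List LVar} : (.inr X : LVar) ∉ B → (∀ a ∈ args, a ∈ B) → args.Nodup →
      IsPattern B (appList (.var (.inr X)) (args.map .var))
  | rigid {B h ts} : ((∃ c, h = .const c) ∨ (∃ v, h = .var v ∧ v ∈ B)) →
      (∀ t ∈ ts, IsPattern B t) → IsPattern B (appList h ts)
  | lam {B x t} : IsPattern (x :: B) t → IsPattern B (.lam x t)

/-! Unification problems and their translations -/

/-- Constraints of a (general) nominal unification problem. -/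
inductive NConstraint where
  | eq : NTerm → NTerm → NConstraint
  | fr : Atom → NTerm → NConstraint

/-- A nominal unification problem. -/
abbrev NProb := List NConstraint

/-- An equational nominal unification problem: a list of equality equations. -/
abbrev EProb := List (NTerm × NTerm)

/-- `⟨Δ, σ⟩` solves a constraint. -/
def solvesC (Δ : Finset (Atom × Var)) (σ : NSub) : NConstraint → Prop
  | .eq t u => Alpha Δ (applyN σ t) (applyN σ u)
  | .fr a t => Fresh Δ a (applyN σ t)

/-- `⟨Δ, σ⟩` solves a nominal unification problem. -/
def solvesP (Δ : Finset (Atom × Var)) (σ : NSub) (P : NProb) : Prop :=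
  ∀ c ∈ P, solvesC Δ σ c

/-- `⟨Δ, σ⟩` solves an equational nominal unification problem. -/
def solvesE (Δ : Finset (Atom × Var)) (σ : NSub) (P : EProb) : Prop :=
  ∀ e ∈ P, Alpha Δ (applyN σ e.1) (applyN σ e.2)

/-- A problem is equational if it contains no freshness constraints. -/
def isEquational (P : NProb) : Prop := ∀ c ∈ P, ∀ a t, c ≠ .fr a t

def sizeConstraint : NConstraint → ℕ
  | .eq t u => 1 + sizeN t + sizeN u
  | .fr _ t => 2 + sizeN t

def sizeNP (P : NProb) : ℕ := (P.map sizeConstraint).sum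

def sizeEP (P : EProb) : ℕ := (P.map (fun e => 1 + sizeN e.1 + sizeN e.2)).sum

/-- Variables of an equational problem. -/
def varsEP (P : EProb) : Finset Var := (P.map (fun e => nvars e.1 ∪ nvars e.2)).foldr (· ∪ ·) ∅

/-- Atoms of an equational problem. -/
def atomsEP (P : EProb) : Finset Atom := (P.map (fun e => natoms e.1 ∪ natoms e.2)).foldr (· ∪ ·) ∅

/-- Translation of an equation: both sides are translated with the empty
environment and closed under `λa₁…λaₙ`. -/
def trEq (as : List Atom) (e : NTerm × NTerm) : LTerm × LTerm :=
  (lamList (as.map .inl) (trT as ∅ e.1), lamList (as.map .inl) (trT as ∅ e.2))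

/-- Translation of an equational nominal problem into a higher-order problem. -/
def trProb (as : List Atom) (P : EProb) : List (LTerm × LTerm) := P.map (trEq as)

def sizeLP (Q : List (LTerm × LTerm)) : ℕ := (Q.map (fun e => 1 + sizeL e.1 + sizeL e.2)).sum

/-! λ-substitutions -/

/-- λ-substitutions over the (images of) nominal variables, with explicit domain. -/
abbrev LSub := Var → Option LTerm

/-- Domain of a λ-substitution. -/
def domL (σ : LSub) : Set Var := {X | (σ X).isSome}

/-- Application of a λ-substitution.  (In translated problems the values are
closed with respect to atom variables, so no capture can occur.) -/
def applyL (σ : LSub) : LTerm → LTerm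
  | .var (.inr X) => (σ X).getD (.var (.inr X))
  | .var v => .var v
  | .const c => .const c
  | .lam x t => .lam x (applyL σ t)
  | .app t u => .app (applyL σ t) (applyL σ u)

/-- `σ` solves a higher-order problem up to αβη. -/
def solvesL (σ : LSub) (Q : List (LTerm × LTerm)) : Prop :=
  ∀ e ∈ Q, Conv (applyL σ e.1) (applyL σ e.2)

/-- The translation `⟦σ⟧_Δ` of a nominal substitution. -/
def trSub (as : List Atom) (Δ : Finset (Atom × Var)) (σ : NSub) : LSub :=
  fun X => (σ X).map (fun t => lamList (as.map .inl) (trT as Δ t))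

/-! The reverse translation -/

/-- The reverse translation relation from λ-terms to nominal terms
(nondeterministic because of the choice of the permutation `π`). -/
inductive RevTr (as : List Atom) (Δ : Finset (Atom × Var)) : LTerm → NTerm → Prop
  | atom (a) : RevTr as Δ (.var (.inl a)) (.atom a)
  | appf {f ts us} : ts.length = us.length → (∀ p ∈ ts.zip us, RevTr as Δ p.1 p.2) →
      RevTr as Δ (appList (.const f) ts) (.app f us)
  | lam {a t u} : RevTr as Δ t u → RevTr as Δ (.lam (.inl a) t) (.abs a u)
  | susp {X : Var} {π : Perm0} {cs : List Atom} : (∀ a ∉ as, permAtom π a = a) →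
      cs.map (permAtom π) = capList as Δ X →
      RevTr as Δ (appList (.var (.inr X)) (cs.map (fun c => .var (.inl c))))
        (.susp π.reverse X)

/-- β-reduce the application of a λ-term to the atom variables `as`. -/
def applyAtoms : LTerm → List Atom → LTerm
  | .lam x t, a :: rest => applyAtoms (nsubst x (.var (.inl a)) t) rest
  | t, rest => appList t (rest.map (fun a => .var (.inl a)))

/-! "More general" relations on unifiers -/

/-- `Δ₂ ⊢ σ'(Δ₁)` : every freshness constraint of `Δ₁` holds after applying `σ'`. -/
def freshEnvHolds (Δ₂ : Finset (Atom × Var)) (σ' : NSub) (Δ₁ : Finset (Atom × Var)) : Prop :=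
  ∀ p ∈ Δ₁, Fresh Δ₂ p.1 (applyN σ' (nsuspV p.2))

/-- `⟨Δ₁,σ₁⟩` is more general than `⟨Δ₂,σ₂⟩`. -/
def moreGeneralN (Δ₁ : Finset (Atom × Var)) (σ₁ : NSub)
    (Δ₂ : Finset (Atom × Var)) (σ₂ : NSub) : Prop :=
  ∃ σ' : NSub, freshEnvHolds Δ₂ σ' Δ₁ ∧
    ∀ X ∈ domN σ₁ ∪ domN σ₂,
      Alpha Δ₂ (applyN σ' (applyN σ₁ (nsuspV X))) (applyN σ₂ (nsuspV X))

/-- A λ-substitution `σ₁` is more general than `σ₂` (modulo αβη). -/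
def moreGeneralL (σ₁ σ₂ : LSub) : Prop :=
  ∃ σ' : LSub, ∀ X ∈ domL σ₁ ∪ domL σ₂,
    Conv (applyL σ' (applyL σ₁ (.var (.inr X)))) (applyL σ₂ (.var (.inr X)))

/-!
Induction on `t`; only a suspension `π·X` with `σ X = u` needs work. There the head of
`⟦σ⟧_Δ(⟦π·X⟧_∅)` is `λa₁…λaₙ.⟦u⟧_Δ`, applied to `π·a₁, …, π·aₙ`. Since every atom of `u` is among
the `aᵢ`, shifting all of them beyond the `aᵢ` is an α-conversion of this abstraction; afterwards
the `n` β-steps are capture-free and perform the renaming `aᵢ ↦ π·aᵢ`, giving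
`π·⟦u⟧_Δ = ⟦π·u⟧_Δ`.
-/

theorem NTerm.ind {P : NTerm → Prop} (atom : ∀ a, P (.atom a))
    (app : ∀ f ts, (∀ t ∈ ts, P t) → P (.app f ts)) (abs : ∀ a t, P t → P (.abs a t))
    (susp : ∀ π X, P (.susp π X)) : ∀ t, P t
  | .atom a => atom a
  | .app f ts => app f ts fun t _ => NTerm.ind atom app abs susp t
  | .abs a t => abs a t (NTerm.ind atom app abs susp t)
  | .susp π X => susp π X

theorem trT_app (as : List Atom) (Δ : Finset (Atom × Var)) (f : ℕ) (ts : List NTerm) :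
    trT as Δ (.app f ts) = appList (.const f) (ts.map (trT as Δ)) := by
  rw [trT, List.attach_map_val]

theorem applyN_app (σ : NSub) (f : ℕ) (ts : List NTerm) :
    applyN σ (.app f ts) = .app f (ts.map (applyN σ)) := by
  rw [applyN, List.attach_map_val]

theorem permTerm_app (π : Perm0) (f : ℕ) (ts : List NTerm) :
    permTerm π (.app f ts) = .app f (ts.map (permTerm π)) := by
  rw [permTerm, List.attach_map_val]

theorem mem_foldr_union {α β : Type*} [DecidableEq β] (l : List α) (F : α → Finset β) (x : β) :
    x ∈ l.foldr (fun a s => F a ∪ s) ∅ ↔ ∃ a ∈ l, x ∈ F a := by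
  induction l <;> simp [*]

theorem mem_natoms_app {a : Atom} {f : ℕ} {ts : List NTerm} :
    a ∈ natoms (.app f ts) ↔ ∃ t ∈ ts, a ∈ natoms t := by
  rw [natoms, mem_foldr_union]
  simp

theorem mem_nvars_app {X : Var} {f : ℕ} {ts : List NTerm} :
    X ∈ nvars (.app f ts) ↔ ∃ t ∈ ts, X ∈ nvars t := by
  rw [nvars, mem_foldr_union]
  simp

theorem permAtom_append (π π' : Perm0) (c : Atom) :
    permAtom (π ++ π') c = permAtom π (permAtom π' c) := by
  simp [permAtom, List.foldr_append]

theorem swapAtom_involutive (a b : Atom) : Function.Involutive (swapAtom a b) := by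
  intro c
  unfold swapAtom
  split_ifs <;> simp_all

theorem permAtom_injective (π : Perm0) : Function.Injective (permAtom π) := by
  induction π with
  | nil => exact fun _ _ h => h
  | cons p π ih => exact fun _ _ h => ih ((swapAtom_involutive p.1 p.2).injective h)

theorem permAtom_mem {S : Finset Atom} {π : Perm0} {X : Var} (hπ : natoms (.susp π X) ⊆ S)
    {c : Atom} (hc : c ∈ S) : permAtom π c ∈ S := by
  induction π with
  | nil => exact hc
  | cons p π ih =>
      rw [natoms, List.foldr_cons, Finset.insert_subset_iff, Finset.insert_subset_iff,
        ← natoms] at hπ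
      obtain ⟨hp₁, hp₂, hπ⟩ := hπ
      show swapAtom p.1 p.2 (permAtom π c) ∈ S
      unfold swapAtom
      split_ifs <;> first | assumption | exact ih hπ

theorem renameAll_comp (f g : LVar → LVar) (t : LTerm) :
    renameAll f (renameAll g t) = renameAll (f ∘ g) t := by
  induction t <;> simp [renameAll, *]

theorem renameAll_congr {f g : LVar → LVar} (t : LTerm) (h : ∀ v ∈ allVarsL t, f v = g v) :
    renameAll f t = renameAll g t := by
  induction t with
  | var v => simp [renameAll, h v (by simp [allVarsL])]
  | const c => rfl
  | app t u iht ihu =>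
      simp only [renameAll]
      rw [iht fun v hv => h v (by simp [allVarsL, hv]), ihu fun v hv => h v (by simp [allVarsL, hv])]
  | lam x t ih =>
      simp only [renameAll]
      rw [h x (by simp [allVarsL]), ih fun v hv => h v (by simp [allVarsL, hv])]

theorem allVarsL_renameAll (f : LVar → LVar) (t : LTerm) :
    allVarsL (renameAll f t) = (allVarsL t).image f := by
  induction t <;> simp [renameAll, allVarsL, Finset.image_union, Finset.image_insert, *]

theorem bvarsL_renameAll (f : LVar → LVar) (t : LTerm) :
    bvarsL (renameAll f t) = (bvarsL t).image f := by
  induction t <;> simp [renameAll, bvarsL, Finset.image_union, Finset.image_insert, *]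

theorem FVL_renameAll {f : LVar → LVar} (hf : Function.Injective f) (t : LTerm) :
    FVL (renameAll f t) = (FVL t).image f := by
  induction t <;> simp [renameAll, FVL, Finset.image_union, Finset.image_erase hf, *]

theorem FVL_subset_allVarsL (t : LTerm) : FVL t ⊆ allVarsL t := by
  induction t with
  | var v => rfl
  | const c => rfl
  | app t u iht ihu => exact Finset.union_subset_union iht ihu
  | lam x t ih => exact (Finset.erase_subset _ _).trans (ih.trans (Finset.subset_insert _ _))

theorem mem_allVarsL_appList {v : LVar} {h : LTerm} {ts : List LTerm} :
    v ∈ allVarsL (appList h ts) ↔ v ∈ allVarsL h ∨ ∃ t ∈ ts, v ∈ allVarsL t := by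
  induction ts generalizing h with
  | nil => simp [appList]
  | cons a ts ih =>
      rw [appList, List.foldl_cons, ← appList, ih]
      simp only [allVarsL, Finset.mem_union, List.mem_cons, exists_eq_or_imp]
      tauto

theorem FVL_lamList (xs : List LVar) (t : LTerm) : FVL (lamList xs t) = FVL t \ xs.toFinset := by
  induction xs with
  | nil => simp [lamList]
  | cons x xs ih =>
      show (FVL (lamList xs t)).erase x = _
      rw [ih, List.toFinset_cons, Finset.sdiff_insert]

theorem bvarsL_lamList (xs : List LVar) (t : LTerm) :
    bvarsL (lamList xs t) = xs.toFinset ∪ bvarsL t := by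
  induction xs with
  | nil => simp [lamList]
  | cons x xs ih =>
      show insert x (bvarsL (lamList xs t)) = _
      rw [ih, List.toFinset_cons, Finset.insert_union]

theorem applyL_appList (σ : LSub) (h : LTerm) (ts : List LTerm) :
    applyL σ (appList h ts) = appList (applyL σ h) (ts.map (applyL σ)) := by
  induction ts generalizing h with
  | nil => rfl
  | cons a ts ih => exact ih (.app h a)

theorem renameAll_appList (f : LVar → LVar) (h : LTerm) (ts : List LTerm) :
    renameAll f (appList h ts) = appList (renameAll f h) (ts.map (renameAll f)) := by
  induction ts generalizing h with
  | nil => rfl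
  | cons a ts ih => exact ih (.app h a)

theorem renameAll_lamList (f : LVar → LVar) (xs : List LVar) (t : LTerm) :
    renameAll f (lamList xs t) = lamList (xs.map f) (renameAll f t) := by
  induction xs with
  | nil => rfl
  | cons x xs ih => exact congrArg (LTerm.lam (f x)) ih

theorem nsubst_lamList {y : LVar} (u : LTerm) {xs : List LVar} (hy : y ∉ xs) (t : LTerm) :
    nsubst y u (lamList xs t) = lamList xs (nsubst y u t) := by
  induction xs with
  | nil => rfl
  | cons x xs ih =>
      rw [List.mem_cons, not_or] at hy
      show nsubst y u (.lam x (lamList xs t)) = .lam x (lamList xs (nsubst y u t))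
      rw [nsubst, if_neg (Ne.symm hy.1), ih hy.2]

theorem conv_appList {h h' : LTerm} (ts : List LTerm) (hc : Conv h h') :
    Conv (appList h ts) (appList h' ts) := by
  induction ts generalizing h h' with
  | nil => exact hc
  | cons a ts ih => exact ih (.appc hc (.refl a))

theorem conv_appList₂ {h h' : LTerm} {ts us : List LTerm} (hc : Conv h h')
    (hl : ts.length = us.length) (hp : ∀ p ∈ ts.zip us, Conv p.1 p.2) :
    Conv (appList h ts) (appList h' us) := by
  induction ts generalizing h h' us with
  | nil => cases us with
    | nil => exact hc
    | cons => simp at hl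
  | cons a ts ih =>
      cases us with
      | nil => simp at hl
      | cons b us =>
          exact ih (h := .app h a) (h' := .app h' b) (.appc hc (hp (a, b) (by simp)))
            (by simpa using hl) fun p hp' => hp p (by simp [hp'])

theorem varMap_involutive (x y : LVar) : Function.Involutive (varMap x y) := by
  intro v
  unfold varMap
  split_ifs <;> simp_all

theorem varMap_left (x y : LVar) : varMap x y x = y := by simp [varMap]

theorem varMap_of_ne {x y v : LVar} (hx : v ≠ x) (hy : v ≠ y) : varMap x y v = v := by
  simp [varMap, hx, hy]

theorem freshVar_not_mem (s : Finset LVar) : freshVar s ∉ s := by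
  intro hmem
  have := Finset.le_sup (f := id) (Finset.mem_image_of_mem
    (fun v : LVar => match v with | .inl a => a | .inr b => b) hmem)
  exact Nat.not_succ_le_self _ this

theorem aeq_renameAll : ∀ (t : LTerm) {h : LVar → LVar}, Function.Injective h →
    (∀ v ∈ FVL t, h v = v) → AEq t (renameAll h t)
  | .var v, h, _, hFV => by
      show AEq (.var v) (.var (h v))
      rw [hFV v (by simp [FVL])]
      exact .var v
  | .const c, _, _, _ => .const c
  | .app t u, _, hinj, hFV =>
      .app (aeq_renameAll t hinj fun v hv => hFV v (by simp [FVL, hv]))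
        (aeq_renameAll u hinj fun v hv => hFV v (by simp [FVL, hv]))
  | .lam x t, h, hinj, hFV => by
      set z := freshVar (allVarsL t ∪ allVarsL (renameAll h t) ∪ {x, h x}) with hz
      have hz_fresh := freshVar_not_mem (allVarsL t ∪ allVarsL (renameAll h t) ∪ {x, h x})
      rw [← hz] at hz_fresh
      simp only [Finset.mem_union, Finset.mem_insert, Finset.mem_singleton, not_or] at hz_fresh
      obtain ⟨⟨hzt, hzht⟩, hzx, hzhx⟩ := hz_fresh
      -- conjugating `h` by the two swappings keeps it injective and fixing the free variables
      set h' := varMap (h x) z ∘ h ∘ varMap x z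
      have hswap : swapL (h x) z (renameAll h t) = renameAll h' (swapL x z t) := by
        unfold swapL
        rw [renameAll_comp, renameAll_comp]
        exact renameAll_congr t fun v _ => by simp [h', varMap_involutive x z v]
      refine .lam z hzt hzht hzx hzhx ?_
      rw [hswap]
      refine aeq_renameAll (swapL x z t)
        ((varMap_involutive _ _).injective.comp (hinj.comp (varMap_involutive _ _).injective)) ?_
      intro v hv
      rw [swapL, FVL_renameAll (varMap_involutive x z).injective] at hv
      obtain ⟨w, hw, rfl⟩ := Finset.mem_image.mp hv
      simp only [h', Function.comp_apply, varMap_involutive x z w]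
      by_cases hwx : w = x
      · rw [hwx, varMap_left, varMap_left]
      · have hwz : w ≠ z := fun hc => hzt (hc ▸ FVL_subset_allVarsL t hw)
        have hhw : h w = w := hFV w (Finset.mem_erase.mpr ⟨hwx, hw⟩)
        have hwhx : w ≠ h x := fun hc => hwx (hinj (hhw.trans hc))
        rw [varMap_of_ne hwx hwz, hhw, varMap_of_ne hwhx hwz]
termination_by t => sizeL t
decreasing_by all_goals simp [sizeL, swapL, sizeL_renameAll]; try omega

/-- Simultaneous renaming of the free variables of a λ-term, without capture avoidance. -/
def psub (ρ : LVar → LVar) : LTerm → LTerm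
  | .var v => .var (ρ v)
  | .const c => .const c
  | .app t u => .app (psub ρ t) (psub ρ u)
  | .lam x t => .lam x (psub (Function.update ρ x x) t)

theorem update_id_self {α : Type*} [DecidableEq α] (x : α) : Function.update id x x = id :=
  Function.update_eq_self x id

theorem psub_id (t : LTerm) : psub id t = t := by
  induction t with
  | var v => rfl
  | const c => rfl
  | app t u iht ihu => simp [psub, iht, ihu]
  | lam x t ih => simp [psub, update_id_self, ih]

theorem bvarsL_psub (ρ : LVar → LVar) (t : LTerm) : bvarsL (psub ρ t) = bvarsL t := by
  induction t generalizing ρ <;> simp [psub, bvarsL, *]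

theorem nsubst_var_eq_psub (y z : LVar) (t : LTerm) :
    nsubst y (.var z) t = psub (Function.update id y z) t := by
  induction t with
  | var v =>
      simp only [nsubst, psub, Function.update_apply, id]
      split_ifs <;> rfl
  | const c => rfl
  | app t u iht ihu => simp [nsubst, psub, iht, ihu]
  | lam x t ih =>
      simp only [nsubst, psub]
      by_cases hxy : x = y
      · simp [hxy, update_id_self, psub_id]
      · rw [if_neg hxy, ih, Function.update_comm (Ne.symm hxy), update_id_self]

theorem psub_psub {ρ₁ : LVar → LVar} (ρ₂ : LVar → LVar) {t : LTerm}
    (h : ∀ w, ρ₁ w = w ∨ ρ₁ w ∉ bvarsL t) : psub ρ₂ (psub ρ₁ t) = psub (ρ₂ ∘ ρ₁) t := by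
  induction t generalizing ρ₁ ρ₂ with
  | var v => rfl
  | const c => rfl
  | app t u iht ihu =>
      simp only [bvarsL, Finset.mem_union, not_or] at h
      simp only [psub]
      rw [iht _ fun w => (h w).imp_right And.left, ihu _ fun w => (h w).imp_right And.right]
  | lam x t ih =>
      simp only [bvarsL, Finset.mem_insert, not_or] at h
      simp only [psub]
      rw [ih _ fun w => by
        by_cases hw : w = x
        · simp [hw]
        · rw [Function.update_of_ne hw]; exact (h w).imp_right And.right]
      congr 2
      funext w
      by_cases hw : w = x
      · simp [hw]
      · have hρw : ρ₁ w ≠ x := fun hc => (h w).elim (fun h' => hw (h'.symm.trans hc))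
          fun h' => h'.1 hc
        simp [Function.update_of_ne hw, Function.update_of_ne hρw]

theorem renameAll_psub {m : LVar → LVar} (hm : Function.Involutive m) (ρ : LVar → LVar)
    (t : LTerm) : renameAll m (psub ρ t) = psub (m ∘ ρ ∘ m) (renameAll m t) := by
  induction t generalizing ρ with
  | var v => simp [renameAll, psub, hm v]
  | const c => rfl
  | app t u iht ihu => simp [renameAll, psub, iht, ihu]
  | lam x t ih =>
      simp only [renameAll, psub, ih]
      congr 2
      funext w
      by_cases hw : w = m x
      · simp [hw, hm x]
      · have hmw : m w ≠ x := fun hc => hw (by rw [← hc, hm])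
        simp [Function.update_of_ne hw, Function.update_of_ne hmw]

def mkRen : List LVar → List LVar → LVar → LVar
  | y :: ys, z :: zs => mkRen ys zs ∘ Function.update id y z
  | _, _ => id

theorem mkRen_of_not_mem {w : LVar} : ∀ {ys : List LVar} (zs : List LVar), w ∉ ys →
    mkRen ys zs w = w
  | [], _, _ => rfl
  | _ :: _, [], _ => rfl
  | y :: ys, z :: zs, hw => by
      rw [List.mem_cons, not_or] at hw
      show mkRen ys zs (Function.update id y z w) = w
      rw [Function.update_of_ne hw.1, id, mkRen_of_not_mem zs hw.2]

theorem mkRen_map {α : Type*} {f g : α → LVar} : ∀ {l : List α}, (l.map f).Nodup →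
    (∀ x ∈ l, ∀ y ∈ l, g x ≠ f y) → ∀ a ∈ l, mkRen (l.map f) (l.map g) (f a) = g a
  | [], _, _, a, ha => absurd ha List.not_mem_nil
  | b :: l, hnd, hgf, a, ha => by
      rw [List.map_cons, List.nodup_cons] at hnd
      show mkRen (l.map f) (l.map g) (Function.update id (f b) (g b) (f a)) = g a
      rcases List.mem_cons.mp ha with rfl | ha
      · rw [Function.update_self]
        refine mkRen_of_not_mem _ fun hc => ?_
        obtain ⟨y, hy, hyeq⟩ := List.mem_map.mp hc
        exact hgf a (by simp) y (by simp [hy]) hyeq.symm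
      · have hfa : f a ≠ f b := fun hc => hnd.1 (hc ▸ List.mem_map_of_mem ha)
        rw [Function.update_of_ne hfa, id]
        exact mkRen_map hnd.2 (fun x hx y hy => hgf x (by simp [hx]) y (by simp [hy])) a ha

theorem conv_appList_lamList : ∀ {ys zs : List LVar} {s : LTerm}, ys.Nodup →
    ys.length = zs.length → (∀ z ∈ zs, z ∉ ys ∧ z ∉ bvarsL s) →
    Conv (appList (lamList ys s) (zs.map .var)) (psub (mkRen ys zs) s)
  | [], [], s, _, _, _ => by rw [show mkRen [] [] = id from rfl, psub_id]; exact .refl s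
  | y :: ys, z :: zs, s, hnd, hlen, hz => by
      rw [List.nodup_cons] at hnd
      have hz₀ := hz z (by simp)
      have hβ : Conv (.app (.lam y (lamList ys s)) (.var z))
          (lamList ys (psub (Function.update id y z) s)) := by
        rw [← nsubst_var_eq_psub, ← nsubst_lamList _ hnd.1]
        refine .beta fun v hv => ?_
        rw [FVL, Finset.mem_singleton] at hv
        rw [hv, bvarsL_lamList, Finset.mem_union, List.mem_toFinset, not_or]
        exact ⟨fun hc => hz₀.1 (by simp [hc]), hz₀.2⟩
      have ih := conv_appList_lamList (s := psub (Function.update id y z) s) hnd.2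
        (by simpa using hlen) fun z' hz' => by
          have := hz z' (by simp [hz'])
          exact ⟨fun hc => this.1 (by simp [hc]), by rw [bvarsL_psub]; exact this.2⟩
      rw [psub_psub _ fun w => ?_] at ih
      · show Conv (appList (.app (.lam y (lamList ys s)) (.var z)) (zs.map .var)) _
        exact .trans (conv_appList _ hβ) ih
      · by_cases hw : w = y
        · right
          rw [hw, Function.update_self]
          exact hz₀.2
        · left
          rw [Function.update_of_ne hw, id]
  | [], _ :: _, _, _, hlen, _ | _ :: _, [], _, _, hlen, _ => by simp at hlen

theorem aeq_psub_renameAll (t : LTerm) : ∀ {ρ H g : LVar → LVar}, Function.Injective H →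
    Function.Injective g → (∀ v ∈ allVarsL t, ρ (H v) = g v) →
    (∀ v ∈ allVarsL t, ∀ w ∈ allVarsL t, g v = H w → v = w) →
    AEq (psub ρ (renameAll H t)) (renameAll g t) := by
  induction t with
  | var v =>
      intro ρ H g _ _ hρ _
      show AEq (.var (ρ (H v))) (.var (g v))
      rw [hρ v (by simp [allVarsL])]
      exact .var _
  | const c => exact fun _ _ _ _ => .const c
  | app t u iht ihu =>
      intro ρ H g hH hg hρ hD
      simp only [allVarsL, Finset.mem_union] at hρ hD
      exact .app (iht hH hg (fun v hv => hρ v (.inl hv)) fun v hv w hw => hD v (.inl hv) w (.inl hw))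
        (ihu hH hg (fun v hv => hρ v (.inr hv)) fun v hv w hw => hD v (.inr hv) w (.inr hw))
  | lam x t ih =>
      intro ρ H g hH hg hρ hD
      have hx : x ∈ allVarsL (.lam x t) := Finset.mem_insert_self x _
      have ht : ∀ v ∈ allVarsL t, v ∈ allVarsL (.lam x t) := fun v => Finset.mem_insert_of_mem
      show AEq (.lam (H x) (psub (Function.update ρ (H x) (H x)) (renameAll H t)))
        (.lam (g x) (renameAll g t))
      set s := allVarsL (psub (Function.update ρ (H x) (H x)) (renameAll H t)) ∪
        (allVarsL t).image g ∪ (allVarsL t).image H ∪ {H x, g x}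
      have hz := freshVar_not_mem s
      set z := freshVar s
      simp only [s, Finset.mem_union, Finset.mem_insert, Finset.mem_singleton, not_or,
        Finset.mem_image, not_exists, not_and] at hz
      obtain ⟨⟨⟨hz₁, hzg⟩, hzH⟩, hzHx, hzgx⟩ := hz
      refine .lam z hz₁ ?_ hzHx hzgx ?_
      · rw [allVarsL_renameAll, Finset.mem_image]
        exact fun ⟨w, hw, hc⟩ => hzg w hw hc
      rw [swapL, renameAll_psub (varMap_involutive (H x) z), renameAll_comp, swapL,
        renameAll_comp]
      apply ih ((varMap_involutive _ _).injective.comp hH) ((varMap_involutive _ _).injective.comp hg)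
      · intro v hv
        simp only [Function.comp_apply, varMap_involutive _ _ (H v)]
        by_cases hvx : v = x
        · rw [hvx, Function.update_self, varMap_left, varMap_left]
        · have h₁ : H v ≠ H x := fun hc => hvx (hH hc)
          have h₂ : g v ≠ H x := fun hc => hvx (hD v (ht v hv) x hx hc)
          have h₃ : g v ≠ g x := fun hc => hvx (hg hc)
          rw [Function.update_of_ne h₁, hρ v (ht v hv), varMap_of_ne h₂ (hzg v hv),
            varMap_of_ne h₃ (hzg v hv)]
      · intro v hv w hw heq
        simp only [Function.comp_apply] at heq
        by_cases hvx : v = x <;> by_cases hwx : w = x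
        · rw [hvx, hwx]
        · rw [hvx, varMap_left, varMap_of_ne (fun hc => hwx (hH hc)) (hzH w hw)] at heq
          exact absurd heq.symm (hzH w hw)
        · rw [hwx, varMap_left, varMap_of_ne (fun hc => hvx (hg hc)) (hzg v hv)] at heq
          exact absurd heq (hzg v hv)
        · rw [varMap_of_ne (fun hc => hvx (hg hc)) (hzg v hv),
            varMap_of_ne (fun hc => hwx (hH hc)) (hzH w hw)] at heq
          exact hD v (ht v hv) w (ht w hw) heq

theorem conv_appList_lamList_perm {as : List Atom} (hnd : as.Nodup) {p : Atom → Atom}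
    (hp : Function.Injective p) (hpas : ∀ b ∈ as, p b ∈ as) {s : LTerm}
    (hs : ∀ a, Sum.inl a ∈ allVarsL s → a ∈ as) :
    Conv (appList (lamList (as.map .inl) s) (as.map fun b => .var (.inl (p b))))
      (renameAll (Sum.map p id) s) := by
  obtain ⟨N, hN⟩ : ∃ N, ∀ a ∈ as, a < N :=
    ⟨as.sum + 1, fun a ha => Nat.lt_succ_of_le (List.le_sum_of_mem ha)⟩
  set H : LVar → LVar := Sum.map (· + N) id
  have hH : Function.Injective H := Sum.map_injective.2 ⟨add_left_injective N, Function.injective_id⟩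
  have hg : Function.Injective (Sum.map p id : LVar → LVar) :=
    Sum.map_injective.2 ⟨hp, Function.injective_id⟩
  have hlow : ∀ b ∈ as, ∀ v, (Sum.inl (p b) : LVar) ≠ H v := by
    intro b hb v
    have := hN _ (hpas b hb)
    rcases v with a | Y
    · simp only [H, Sum.map_inl, ne_eq, Sum.inl.injEq]
      exact fun h => (Nat.le_add_left N a).not_gt (h ▸ this)
    · simp [H]
  set ys := as.map (H ∘ Sum.inl)
  set zs : List LVar := as.map (Sum.inl ∘ p)
  have hys : ys.Nodup := hnd.map (hH.comp Sum.inl_injective)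
  have hα : AEq (lamList (as.map .inl) s) (lamList ys (renameAll H s)) := by
    have := aeq_renameAll (lamList (as.map .inl) s) hH fun v hv => ?_
    · rwa [renameAll_lamList, List.map_map] at this
    rw [FVL_lamList, Finset.mem_sdiff, List.mem_toFinset] at hv
    rcases v with a | Y
    · exact absurd (List.mem_map_of_mem (hs a (FVL_subset_allVarsL s hv.1))) hv.2
    · rfl
  have hβ : Conv (appList (lamList ys (renameAll H s)) (zs.map .var))
      (psub (mkRen ys zs) (renameAll H s)) := by
    refine conv_appList_lamList hys (by simp [ys, zs]) fun z hz => ?_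
    obtain ⟨b, hb, rfl⟩ := List.mem_map.mp hz
    rw [bvarsL_renameAll, List.mem_map, Finset.mem_image]
    exact ⟨fun ⟨a, _, hc⟩ => hlow b hb _ hc.symm, fun ⟨w, _, hc⟩ => hlow b hb w hc.symm⟩
  have hren : AEq (psub (mkRen ys zs) (renameAll H s)) (renameAll (Sum.map p id) s) := by
    refine aeq_psub_renameAll s hH hg (fun v hv => ?_) fun v hv w hw heq => ?_
    · rcases v with a | Y
      · exact mkRen_map hys (fun x hx y _ => hlow x hx _) a (hs a hv)
      · exact mkRen_of_not_mem zs (by simp [ys, H])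
    · rcases v with a | Y
      · exact absurd heq (hlow a (hs a hv) w)
      · rcases w with b | Z <;> simp_all [H]
  rw [List.map_map] at hβ
  exact .trans (conv_appList _ (.alpha hα)) (.trans hβ (.alpha hren))

theorem trT_permTerm (as : List Atom) (Δ : Finset (Atom × Var)) (π : Perm0) (u : NTerm) :
    trT as Δ (permTerm π u) = renameAll (Sum.map (permAtom π) id) (trT as Δ u) := by
  induction u using NTerm.ind with
  | atom a => simp [permTerm, trT, renameAll]
  | app f ts ih =>
      rw [permTerm_app, trT_app, trT_app, renameAll_appList, List.map_map, List.map_map]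
      exact congrArg _ (List.map_congr_left ih)
  | abs a t ih => simp [permTerm, trT, renameAll, ih]
  | susp π' X =>
      simp [permTerm, trT, renameAll_appList, List.map_map, Function.comp_def, renameAll,
        permAtom_append]

theorem mem_of_inl_mem_allVarsL_trT {as : List Atom} {Δ : Finset (Atom × Var)} {u : NTerm}
    (hu : natoms u ⊆ as.toFinset) {a : Atom} (ha : Sum.inl a ∈ allVarsL (trT as Δ u)) :
    a ∈ as := by
  induction u using NTerm.ind with
  | atom b =>
      simp only [trT, allVarsL, Finset.mem_singleton, Sum.inl.injEq] at ha
      exact List.mem_toFinset.1 (hu (by simp [natoms, ha]))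
  | app f ts ih =>
      rw [trT_app, mem_allVarsL_appList] at ha
      obtain ha | ⟨_, hmem, ha⟩ := ha
      · simp [allVarsL] at ha
      obtain ⟨t, ht, rfl⟩ := List.mem_map.mp hmem
      exact ih t ht (fun b hb => hu (mem_natoms_app.2 ⟨t, ht, hb⟩)) ha
  | abs b t ih =>
      rw [natoms, Finset.insert_subset_iff] at hu
      simp only [trT, allVarsL, Finset.mem_insert, Sum.inl.injEq] at ha
      obtain rfl | ha := ha
      · exact List.mem_toFinset.1 hu.1
      · exact ih hu.2 ha
  | susp π X =>
      rw [trT, mem_allVarsL_appList] at ha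
      obtain ha | ⟨_, hmem, ha⟩ := ha
      · simp [allVarsL] at ha
      obtain ⟨c, hc, rfl⟩ := List.mem_map.mp hmem
      simp only [allVarsL, Finset.mem_singleton, Sum.inl.injEq] at ha
      rw [ha]
      exact List.mem_toFinset.1 (permAtom_mem hu (List.mem_toFinset.2 (List.mem_filter.1 hc).1))

theorem capList_empty (as : List Atom) (X : Var) : capList as ∅ X = as := by
  simp [capList]

/-- if `Vars(t) ⊆ Dom(σ)` then `⟦σ⟧_Δ(⟦t⟧_∅) = ⟦σ(t)⟧_Δ`
up to βη-equivalence. -/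
theorem statement15 (as : List Atom) (hnd : as.Nodup)
    (Δ : Finset (Atom × Var)) (σ : NSub) (t : NTerm)
    (ht : natoms t ⊆ as.toFinset)
    (hσ : ∀ X u, σ X = some u → natoms u ⊆ as.toFinset)
    (hdom : ∀ X ∈ nvars t, X ∈ domN σ) :
    Conv (applyL (trSub as Δ σ) (trT as ∅ t)) (trT as Δ (applyN σ t)) := by
  induction t using NTerm.ind with
  | atom a => simpa [trT, applyN, applyL] using .refl _
  | app f ts ih =>
      rw [trT_app, applyN_app, trT_app, applyL_appList, List.map_map, List.map_map]
      refine conv_appList₂ (.refl _) (by simp) fun p hp => ?_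
      rw [List.zip_map'] at hp
      obtain ⟨t, ht', rfl⟩ := List.mem_map.mp hp
      exact ih t ht' (fun a ha => ht (mem_natoms_app.2 ⟨t, ht', ha⟩))
        fun X hX => hdom X (mem_nvars_app.2 ⟨t, ht', hX⟩)
  | abs a t ih =>
      rw [natoms, Finset.insert_subset_iff] at ht
      rw [trT, applyN, trT]
      exact .lamc (ih ht.2 fun X hX => hdom X (by rwa [nvars]))
  | susp π X =>
      obtain ⟨u, hu⟩ := Option.isSome_iff_exists.mp (hdom X (by simp [nvars]))
      have hX : applyL (trSub as Δ σ) (.var (.inr X)) = lamList (as.map .inl) (trT as Δ u) := by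
        simp [applyL, trSub, hu]
      rw [trT, capList_empty, applyL_appList, hX, applyN, hu, trT_permTerm, List.map_map]
      exact conv_appList_lamList_perm hnd (permAtom_injective π)
        (fun b hb => List.mem_toFinset.1 (permAtom_mem ht (List.mem_toFinset.2 hb)))
        fun a ha => mem_of_inl_mem_allVarsL_trT (hσ X u hu) ha
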